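/- arXiv:2106.09570 — 2 statements merged into one kernel-verified Lean document; each statement's English description precedes it below -/
import Mathlib

section
/- For complex numbers a, b, c with c ≠ 0, |Im(ab/c)| ≤ (|Im(a)|·|b|·|c| + |Im(b)|·|a|·|c| + |Im(c)|·|a|·|b| + |Im(a)|·|Im(b)|·|Im(c)|) / |c|². -/
/-! Multiplying numerator and denominator by `conj c` gives
`Im(ab/c) = Im(ab c̄) / |c|²`. Expanding `Im(ab c̄)` in real and imaginary parts yields four
monomials, each containing at least one imaginary part; bounding every remaining real part
by the modulus gives the four terms of the numerator. -/

open ComplexConjugate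

namespace Complex

theorem im_div_eq_im_mul_conj_div (z w : ℂ) : (z / w).im = (z * conj w).im / ‖w‖ ^ 2 := by
  rw [div_im, ← normSq_eq_norm_sq]
  simp only [mul_im, conj_re, conj_im]
  ring

theorem im_mul_mul_conj (a b c : ℂ) :
    (a * b * conj c).im =
      a.im * b.re * c.re + a.re * b.im * c.re - a.re * b.re * c.im + a.im * b.im * c.im := by
  simp only [mul_im, mul_re, conj_re, conj_im]
  ring

theorem abs_im_mul_mul_conj_le (a b c : ℂ) :
    |(a * b * conj c).im| ≤
      |a.im| * ‖b‖ * ‖c‖ + |b.im| * ‖a‖ * ‖c‖ + |c.im| * ‖a‖ * ‖b‖ + |a.im| * |b.im| * |c.im| := by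
  rw [im_mul_mul_conj]
  calc _ ≤ |a.im * b.re * c.re + a.re * b.im * c.re - a.re * b.re * c.im| +
          |a.im * b.im * c.im| := abs_add_le _ _
    _ ≤ |a.im * b.re * c.re + a.re * b.im * c.re| + |a.re * b.re * c.im| +
          |a.im * b.im * c.im| := by gcongr; exact abs_sub _ _
    _ ≤ |a.im * b.re * c.re| + |a.re * b.im * c.re| + |a.re * b.re * c.im| +
          |a.im * b.im * c.im| := by gcongr; exact abs_add_le _ _
    _ ≤ |a.im| * ‖b‖ * ‖c‖ + ‖a‖ * |b.im| * ‖c‖ + ‖a‖ * ‖b‖ * |c.im| +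
          |a.im| * |b.im| * |c.im| := by
      simp only [abs_mul]
      gcongr <;> exact abs_re_le_norm _
    _ = _ := by ring

end Complex

theorem abs_im_mul_div_le_general (a b c : ℂ) :
    |(a * b / c).im| ≤
      (|a.im| * ‖b‖ * ‖c‖ + |b.im| * ‖a‖ * ‖c‖ +
        |c.im| * ‖a‖ * ‖b‖ + |a.im| * |b.im| * |c.im|) /
        ‖c‖ ^ 2 := by
  rw [Complex.im_div_eq_im_mul_conj_div, abs_div, abs_of_nonneg (sq_nonneg ‖c‖)]
  gcongr
  exact Complex.abs_im_mul_mul_conj_le a b c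

/-- For complex `a`, `b`, `c` with `c ≠ 0`:
`|Im(ab/c)| ≤ (|Im a||b||c| + |Im b||a||c| + |Im c||a||b| + |Im a||Im b||Im c|)/|c|²`. -/
theorem abs_im_mul_div_le (a b c : ℂ) (hc : c ≠ 0) :
    |(a * b / c).im| ≤
      (|a.im| * ‖b‖ * ‖c‖ + |b.im| * ‖a‖ * ‖c‖ +
        |c.im| * ‖a‖ * ‖b‖ + |a.im| * |b.im| * |c.im|) /
        ‖c‖ ^ 2 :=
  abs_im_mul_div_le_general a b c
end

section
/- Let v, w ∈ ℝ^N be unit vectors, let ε, c > 0 with ε < c, and suppose (i) there is an index i with v_i ≥ 1/√N and w_i ≥ 0, (ii) max_{j,k} N·|v_j v_k − w_j w_k| ≤ N^{-c}, and (iii) ‖w‖_∞ ≤ N^{ε−1/2}. Then √N·‖v − w‖_∞ ≤ N^{-c} + N^{ε−c}. -/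
/-- Closeness of unit vectors from closeness of their rank-one products: if
`v`, `w` are unit vectors in `ℝ^N`, `0 < ε < c`, there is `i` with `v i ≥ 1/√N` and `w i ≥ 0`,
`N·|v_j v_k − w_j w_k| ≤ N^{-c}` for all `j, k`, and `‖w‖_∞ ≤ N^{ε−1/2}`, then
`√N·‖v − w‖_∞ ≤ N^{-c} + N^{ε−c}`. -/
theorem sup_norm_close_of_products_close
    (N : ℕ) (v w : Fin N → ℝ)
    (hv : ∑ i, v i ^ 2 = 1) (hw : ∑ i, w i ^ 2 = 1)
    (ε c : ℝ) (hε : 0 < ε) (hc : 0 < c) (hεc : ε < c)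
    (hi : ∃ i, 1 / Real.sqrt N ≤ v i ∧ 0 ≤ w i)
    (hclose : ∀ j k, (N : ℝ) * |v j * v k - w j * w k| ≤ (N : ℝ) ^ (-c))
    (hinf : ∀ j, |w j| ≤ (N : ℝ) ^ (ε - 1/2)) :
    ∀ j, Real.sqrt N * |v j - w j| ≤ (N : ℝ) ^ (-c) + (N : ℝ) ^ (ε - c) := by
  intro j
  have hN : 0 < N := by
    rcases Nat.eq_zero_or_pos N with h | h
    · subst h; simp at hv
    · exact h
  have ha0 : (0:ℝ) < (N:ℝ) := by exact_mod_cast hN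
  have ha1 : (1:ℝ) ≤ (N:ℝ) := by exact_mod_cast hN
  set a : ℝ := (N:ℝ) with haa
  set s := Real.sqrt a with hsdef
  have hs0 : 0 < s := Real.sqrt_pos.mpr ha0
  have hss : s * s = a := Real.mul_self_sqrt ha0.le
  obtain ⟨i, hvi, hwi⟩ := hi
  have hvip : 0 < v i := lt_of_lt_of_le (by positivity) hvi
  have hsv : 1 ≤ s * v i := by
    have := (div_le_iff₀ hs0).mp hvi
    linarith [mul_comm (v i) s]
  set P := a ^ (-c) with hP
  set Q := a ^ (ε - 1/2) with hQ
  have hP0 : 0 < P := Real.rpow_pos_of_pos ha0 _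
  have hQ0 : 0 < Q := Real.rpow_pos_of_pos ha0 _
  have hgoal : a ^ (ε - c) = Q * P * s := by
    rw [hQ, hP, hsdef, Real.sqrt_eq_rpow, ← Real.rpow_add ha0, ← Real.rpow_add ha0]
    congr 1; ring
  set di := |v i - w i| with hdi
  set dj := |v j - w j| with hdj
  have hdi0 : 0 ≤ di := abs_nonneg _
  have hdj0 : 0 ≤ dj := abs_nonneg _
  -- step 1 : a * di * (v i + w i) ≤ P
  have h1 : a * (di * (v i + w i)) ≤ P := by
    have h := hclose i i
    have e : |v i * v i - w i * w i| = di * (v i + w i) := by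
      rw [hdi, show v i * v i - w i * w i = (v i - w i) * (v i + w i) by ring, abs_mul,
        abs_of_nonneg (by linarith : (0:ℝ) ≤ v i + w i)]
    rw [e] at h
    linarith [mul_assoc a di (v i + w i)]
  -- step 2 : a * di ≤ s * P
  have h2 : a * di ≤ s * P := by
    nlinarith [mul_nonneg hdi0 hwi, mul_nonneg (mul_nonneg ha0.le hdi0) hwi,
      mul_le_mul_of_nonneg_left h1 hs0.le,
      mul_nonneg (mul_nonneg ha0.le hdi0) (mul_nonneg hs0.le hwi)]
  -- step 3 : a * (v i * dj) ≤ P + Q * (s * P)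
  have h3 : a * (v i * dj) ≤ P + Q * (s * P) := by
    have h := hclose i j
    have e : v i * dj ≤ |v i * v j - w i * w j| + |w j| * di := by
      have : v i * (v j - w j) = (v i * v j - w i * w j) - w j * (v i - w i) := by ring
      calc v i * dj = |v i * (v j - w j)| := by
            rw [hdj, abs_mul, abs_of_nonneg hvip.le]
        _ = |(v i * v j - w i * w j) - w j * (v i - w i)| := by rw [this]
        _ ≤ |v i * v j - w i * w j| + |w j * (v i - w i)| := abs_sub _ _
        _ = |v i * v j - w i * w j| + |w j| * di := by rw [abs_mul, hdi]
    have e2 : a * (v i * dj) ≤ a * |v i * v j - w i * w j| + a * (|w j| * di) :=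
      by nlinarith [mul_le_mul_of_nonneg_left e ha0.le]
    have e3 : a * (|w j| * di) ≤ Q * (s * P) := by
      have := hinf j
      nlinarith [abs_nonneg (w j), mul_le_mul_of_nonneg_right this (mul_nonneg ha0.le hdi0)]
    linarith
  -- conclude
  rw [hgoal]
  have key : s * (s * dj) ≤ s * (P + Q * P * s) := by
    have t1 : a * dj ≤ a * dj * (s * v i) :=
      le_mul_of_one_le_right (mul_nonneg ha0.le hdj0) hsv
    have t3 := mul_le_mul_of_nonneg_left h3 hs0.le
    have e1 : s * (s * dj) = a * dj := by rw [← hss]; ring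
    have e2 : a * dj * (s * v i) = s * (a * (v i * dj)) := by ring
    have e3 : s * (P + Q * (s * P)) = s * (P + Q * P * s) := by ring
    linarith
  exact le_of_mul_le_mul_left key hs0
end
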